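/- The Chlodowsky (p,q) Kantorovich–Stancu–Schurer operator relates to the Kantorovich (p,q)-Bernstein–Schurer operator T_{n,m} by the moment transfer formula: for every natural u, K_{n,m}^{(α,β)}(t^u; x, p, q) = ([n+1]_{p,q}^u b_n^u/([n+1]_{p,q} + β)^u) · ∑_{i=0}^u C(u,i) (α/[n+1]_{p,q})^{u−i} T_{n,m}(t^i; x/b_n, p, q), where C(u,i) is the ordinary binomial coefficient. -/

import Mathlib

noncomputable def pqInt (p q : ℝ) (n : ℕ) : ℝ := (p ^ n - q ^ n) / (p - q)

noncomputable def pqFac (p q : ℝ) (n : ℕ) : ℝ :=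
  ∏ j ∈ Finset.range n, pqInt p q (j + 1)

noncomputable def pqChoose (p q : ℝ) (n k : ℕ) : ℝ :=
  pqFac p q n / (pqFac p q k * pqFac p q (n - k))

/-- The (p,q)-integral of `g` on `[0,1]`. -/
noncomputable def pqIntegral (p q : ℝ) (g : ℝ → ℝ) : ℝ :=
  (p - q) * ∑' j : ℕ, (q ^ j / p ^ (j + 1)) * g (q ^ j / p ^ (j + 1))

/-- The Kantorovich type (p,q)-Bernstein–Schurer operator of Mursaleen–Khan. -/
noncomputable def Tpq (p q : ℝ) (n m : ℕ) (f : ℝ → ℝ) (y : ℝ) : ℝ :=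
  ∑ k ∈ Finset.range (n + m + 1),
    pqChoose p q (n + m) k * y ^ k *
      (∏ s ∈ Finset.range (n + m - k), (p ^ s - q ^ s * y)) *
      pqIntegral p q (fun t =>
        f (((1 - t) * pqInt p q k + pqInt p q (k + 1) * t) / pqInt p q (n + 1)))

/-- The Chlodowsky variant of the (p,q) Kantorovich–Stancu–Schurer operator. -/
noncomputable def Kop (p q : ℝ) (n m α β : ℕ) (bn : ℝ) (f : ℝ → ℝ) (x : ℝ) : ℝ :=
  ∑ k ∈ Finset.range (n + m + 1),
    pqChoose p q (n + m) k *
      (∏ s ∈ Finset.range (n + m - k), (p ^ s - q ^ s * (x / bn))) *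
      (x / bn) ^ k *
      pqIntegral p q (fun t =>
        f (((1 - t) * pqInt p q k + pqInt p q (k + 1) * t + (α : ℝ)) * bn /
            (pqInt p q (n + 1) + (β : ℝ))))

/-!
Writing `N = [n+1]_{p,q}`, the argument of `f` in the `k`-th term of `Kop` is
`(A(t) + α) · bₙ/(N + β)`, where `A(t)/N` is the argument of `f` in the `k`-th term of `Tpq`
at `y = x/bₙ`. Expanding `(A(t) + α)^u = N^u ∑ᵢ C(u,i) (α/N)^{u-i} (A(t)/N)^i` binomially and
using linearity of the (p,q)-integral gives the formula term by term. Linearity holds because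
the (p,q)-integral of a function bounded on the nodes `q^j/p^{j+1} ∈ [0, 1/p]` is an
absolutely convergent series, dominated by a geometric series of ratio `q/p`.
-/

open Finset Set

lemma pqInt_pos {p q : ℝ} (hq : 0 ≤ q) (hqp : q < p) {n : ℕ} (hn : n ≠ 0) :
    0 < pqInt p q n :=
  div_pos (sub_pos.2 (pow_lt_pow_left₀ hqp hq hn)) (sub_pos.2 hqp)

lemma summable_pqIntegral {p q : ℝ} (hq : 0 ≤ q) (hqp : q < p) {g : ℝ → ℝ}
    (hg : ContinuousOn g (Icc 0 p⁻¹)) :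
    Summable fun j : ℕ => q ^ j / p ^ (j + 1) * g (q ^ j / p ^ (j + 1)) := by
  have hp : 0 < p := hq.trans_lt hqp
  obtain ⟨C, hC⟩ := isCompact_Icc.exists_bound_of_continuousOn hg
  have hnode : ∀ j : ℕ, q ^ j / p ^ (j + 1) = p⁻¹ * (q / p) ^ j := fun j => by
    rw [div_pow, pow_succ]; field_simp
  have hratio : q / p < 1 := (div_lt_one hp).2 hqp
  refine Summable.of_norm_bounded
    ((summable_geometric_of_lt_one (by positivity) hratio).mul_left (p⁻¹ * C)) fun j => ?_
  have hmem : q ^ j / p ^ (j + 1) ∈ Icc 0 p⁻¹ := by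
    rw [hnode]
    exact ⟨by positivity, mul_le_of_le_one_right (by positivity)
      (pow_le_one₀ (by positivity) hratio.le)⟩
  rw [norm_mul, Real.norm_of_nonneg hmem.1]
  calc q ^ j / p ^ (j + 1) * ‖g (q ^ j / p ^ (j + 1))‖ ≤ q ^ j / p ^ (j + 1) * C := by
        gcongr; exact hC _ hmem
    _ = p⁻¹ * C * (q / p) ^ j := by rw [hnode]; ring

lemma pqIntegral_const_mul (p q c : ℝ) (g : ℝ → ℝ) :
    pqIntegral p q (fun t => c * g t) = c * pqIntegral p q g := by
  simp only [pqIntegral, mul_left_comm _ c, tsum_mul_left]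

lemma pqIntegral_finset_sum {p q : ℝ} (hq : 0 ≤ q) (hqp : q < p) {ι : Type*} (s : Finset ι)
    (f : ι → ℝ → ℝ) (hf : ∀ i ∈ s, ContinuousOn (f i) (Icc 0 p⁻¹)) :
    pqIntegral p q (fun t => ∑ i ∈ s, f i t) = ∑ i ∈ s, pqIntegral p q (f i) := by
  simp only [pqIntegral, Finset.mul_sum]
  rw [Summable.tsum_finsetSum fun i hi => summable_pqIntegral hq hqp (hf i hi), Finset.mul_sum]

lemma add_mul_pow_eq_sum_div_pow {N : ℝ} (hN : N ≠ 0) (a c d : ℝ) (u : ℕ) :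
    ((a + d) * c) ^ u =
      N ^ u * c ^ u * ∑ i ∈ range (u + 1), (u.choose i : ℝ) * (d / N) ^ (u - i) * (a / N) ^ i := by
  rw [mul_pow, add_pow, Finset.mul_sum, Finset.sum_mul]
  refine Finset.sum_congr rfl fun i hi => ?_
  have hiu : i ≤ u := Nat.lt_succ_iff.1 (Finset.mem_range.1 hi)
  have hsplit : (d / N) ^ (u - i) * (a / N) ^ i = d ^ (u - i) * a ^ i / N ^ u := by
    rw [div_pow, div_pow, div_mul_div_comm, ← pow_add, Nat.sub_add_cancel hiu]
  rw [mul_assoc (u.choose i : ℝ), hsplit]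
  field_simp

lemma pqIntegral_add_mul_pow {p q : ℝ} (hq : 0 ≤ q) (hqp : q < p) {N : ℝ} (hN : N ≠ 0)
    {A : ℝ → ℝ} (hA : Continuous A) (c d : ℝ) (u : ℕ) :
    pqIntegral p q (fun t => ((A t + d) * c) ^ u) =
      N ^ u * c ^ u * ∑ i ∈ range (u + 1),
        (u.choose i : ℝ) * (d / N) ^ (u - i) * pqIntegral p q (fun t => (A t / N) ^ i) := by
  simp only [add_mul_pow_eq_sum_div_pow hN _ c d u]
  rw [pqIntegral_const_mul, pqIntegral_finset_sum hq hqp _ _ fun i _ => by fun_prop]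
  simp only [pqIntegral_const_mul]

theorem Kop_moment_transfer_general (p q : ℝ) (hq : 0 < q) (hqp : q < p)
    (n m α β : ℕ) (bn : ℝ) (x : ℝ) (u : ℕ) :
    Kop p q n m α β bn (fun t => t ^ u) x =
      (pqInt p q (n + 1)) ^ u * bn ^ u / (pqInt p q (n + 1) + (β : ℝ)) ^ u *
        ∑ i ∈ Finset.range (u + 1),
          (Nat.choose u i : ℝ) * ((α : ℝ) / pqInt p q (n + 1)) ^ (u - i) *
            Tpq p q n m (fun t => t ^ i) (x / bn) := by
  have hN : pqInt p q (n + 1) ≠ 0 := (pqInt_pos hq.le hqp n.succ_ne_zero).ne'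
  simp only [Kop, Tpq, mul_div_assoc, Finset.mul_sum]
  rw [Finset.sum_comm]
  refine Finset.sum_congr rfl fun k _ => ?_
  rw [pqIntegral_add_mul_pow hq.le hqp hN (by fun_prop), Finset.mul_sum, Finset.mul_sum]
  refine Finset.sum_congr rfl fun i _ => ?_
  rw [div_pow]
  ring

theorem Kop_moment_transfer (p q : ℝ) (hq : 0 < q) (hqp : q < p) (hp : p ≤ 1)
    (n m α β : ℕ) (hn : 1 ≤ n) (hαβ : α ≤ β) (bn : ℝ) (hbn : 0 < bn)
    (x : ℝ) (hx0 : 0 ≤ x) (hx1 : x ≤ bn) (u : ℕ) :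
    Kop p q n m α β bn (fun t => t ^ u) x =
      (pqInt p q (n + 1)) ^ u * bn ^ u / (pqInt p q (n + 1) + (β : ℝ)) ^ u *
        ∑ i ∈ Finset.range (u + 1),
          (Nat.choose u i : ℝ) * ((α : ℝ) / pqInt p q (n + 1)) ^ (u - i) *
            Tpq p q n m (fun t => t ^ i) (x / bn) :=
  Kop_moment_transfer_general p q hq hqp n m α β bn x u
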